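/- Let F be the free group of rank m ≥ 2 and let a ∈ Σ. Then for all real t ∈ (−1,1): g_{C(a,a^{-1})}(t) = t²/(4m²(1−t)) + t²/(4m²(2m−1+t)) − (2m−1)t²/(2m((2m−1)²−t²)). -/

import Mathlib

open Filter Set

noncomputable section

/-- The free group of rank `m`. -/
abbrev FG (m : ℕ) := FreeGroup (Fin m)

/-- The length of the reduced word of `g`. -/
def glen {m : ℕ} (g : FG m) : ℕ := (FreeGroup.toWord g).length

/-- The cardinality of the sphere of radius `k` in the free group of rank `m`,
as a real number: `1` if `k = 0` and `2m(2m-1)^(k-1)` otherwise. -/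
def sphereCard (m k : ℕ) : ℝ :=
  if k = 0 then 1 else 2 * (m : ℝ) * (2 * (m : ℝ) - 1) ^ (k - 1)

/-- `n_k(R)`: the number of elements of length `k` in `R`. -/
def nk {m : ℕ} (R : Set (FG m)) (k : ℕ) : ℕ := {g ∈ R | glen g = k}.ncard

/-- `f_k(R) = n_k(R) / |S_k|`: the frequency of elements of `R` among words of length `k`. -/
def fk {m : ℕ} (R : Set (FG m)) (k : ℕ) : ℝ := (nk R k : ℝ) / sphereCard m k

/-- The frequency generating function `g_R(t) = ∑ f_k(R) t^k`. -/
def genFun {m : ℕ} (R : Set (FG m)) (t : ℝ) : ℝ := ∑' k : ℕ, fk R k * t ^ k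

/-- The adjusted generating function `g*_R(t) = ∑ n_k(R) (t/(2m-1))^k`. -/
def genFunStar {m : ℕ} (R : Set (FG m)) (t : ℝ) : ℝ :=
  ∑' k : ℕ, (nk R k : ℝ) * (t / (2 * (m : ℝ) - 1)) ^ k

/-- `R` is thick: `lim_{t→1⁻} (1-t)·g_R(t)` exists and is positive. -/
def IsThick {m : ℕ} (R : Set (FG m)) : Prop :=
  ∃ c : ℝ, 0 < c ∧
    Tendsto (fun t => (1 - t) * genFun R t) (nhdsWithin 1 (Set.Iio 1)) (nhds c)

/-- `R` is exponentially negligible (exponentially λ-measurable): there is `δ ∈ (0,1)`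
with `f_k(R) < δ^k` for all sufficiently large `k`. -/
def ExpNegligible {m : ℕ} (R : Set (FG m)) : Prop :=
  ∃ δ : ℝ, 0 < δ ∧ δ < 1 ∧ ∀ᶠ k : ℕ in atTop, fk R k < δ ^ k

/-- `R ⊆ F` is a regular set if the language of reduced words of its elements
(over the alphabet `Σ = X ∪ X⁻¹`, encoded as `Fin m × Bool`) is a regular language. -/
def IsRegularSet {m : ℕ} (R : Set (FG m)) : Prop :=
  Language.IsRegular {w : List (Fin m × Bool) | ∃ g ∈ R, FreeGroup.toWord g = w}

/-- The cone `C(w) = { wf : |wf| = |w| + |f| }`. -/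
def cone {m : ℕ} (w : FG m) : Set (FG m) :=
  {g | ∃ f, g = w * f ∧ glen g = glen w + glen f}

/-- The right cone `C[w] = { fw : |fw| = |f| + |w| }`. -/
def coneR {m : ℕ} (w : FG m) : Set (FG m) :=
  {g | ∃ f, g = f * w ∧ glen g = glen f + glen w}

/-- The double-based cone `C(u,v) = { ufv : |ufv| = |u| + |f| + |v| }`. -/
def dcone {m : ℕ} (u v : FG m) : Set (FG m) :=
  {g | ∃ f, g = u * f * v ∧ glen g = glen u + glen f + glen v}

/-- The prefix closure of `R`. -/
def prefixClosure {m : ℕ} (R : Set (FG m)) : Set (FG m) :=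
  {p | ∃ g ∈ R, ∃ s, g = p * s ∧ glen g = glen p + glen s}

/-- A finite deterministic partial automaton over the alphabet
`Σ = X ∪ X⁻¹` (encoded as `Fin m × Bool`), with one initial and one final state. -/
structure PAut (m : ℕ) where
  n : ℕ
  step : Fin n → Fin m × Bool → Option (Fin n)
  start : Fin n
  accept : Fin n

namespace PAut

variable {m : ℕ}

/-- Run the automaton from state `s` on the word `w`. -/
def evalFrom (A : PAut m) : Fin A.n → List (Fin m × Bool) → Option (Fin A.n)
  | s, [] => some s
  | s, a :: w =>
    match A.step s a with
    | none => none
    | some s' => A.evalFrom s' w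

/-- The set of words accepted by `A`. -/
def words (A : PAut m) : Set (List (Fin m × Bool)) :=
  {w | A.evalFrom A.start w = some A.accept}

/-- The language of `A`, identified with a subset of the free group. -/
def lang (A : PAut m) : Set (FG m) :=
  (fun w => FreeGroup.mk w) '' A.words

/-- Conditions (c)–(f) of a special automaton:
(c) every state is reachable from the initial state;
(d) the final state is reachable from every state;
(e) all transitions entering a given state carry the same label (the type of the state);
(f) if a state has type `x`, no transition labeled `x⁻¹` leaves it. -/
def CoreSpecial (A : PAut m) : Prop :=
  (∀ s, ∃ w, A.evalFrom A.start w = some s) ∧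
  (∀ s, ∃ w, A.evalFrom s w = some A.accept) ∧
  (∀ s₁ a₁ s₂ a₂ s, A.step s₁ a₁ = some s → A.step s₂ a₂ = some s → a₁ = a₂) ∧
  (∀ s' a s, A.step s' a = some s → A.step s (a.1, !a.2) = none)

/-- A special automaton over the free group: conditions (a)–(f), with distinct
initial and final states and no transition entering the initial state. -/
def IsSpecial (A : PAut m) : Prop :=
  A.start ≠ A.accept ∧ (∀ s a, A.step s a ≠ some A.start) ∧ A.CoreSpecial

/-- A special monoid automaton: conditions (c)–(f), with the initial state equal to
the final state. -/
def IsSpecialMonoidAut (A : PAut m) : Prop :=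
  A.start = A.accept ∧ A.CoreSpecial

/-- `A` is `Σ`-complete: every state `s` has a type `x` and for every label
`y ≠ x⁻¹` the transition `δ(s,y)` is defined. -/
def SigmaComplete (A : PAut m) : Prop :=
  ∀ s, ∃ a, (∃ s', A.step s' a = some s) ∧
    ∀ b, b ≠ (a.1, !a.2) → (A.step s b).isSome

end PAut

/-- A special monoid: the language of a special monoid automaton. -/
def IsSpecialMonoid {m : ℕ} (M : Set (FG m)) : Prop :=
  ∃ A : PAut m, A.IsSpecialMonoidAut ∧ M = A.lang

/-- A thick monoid: the language of a `Σ`-complete special monoid automaton. -/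
def IsThickMonoid {m : ℕ} (M : Set (FG m)) : Prop :=
  ∃ A : PAut m, A.IsSpecialMonoidAut ∧ A.SigmaComplete ∧ M = A.lang


/-!
Write `x` for the letter spelling `a`. The elements of `C(a, a⁻¹)` of length `k + 1` are exactly
the reduced words of length `k + 1` from `x` to `x⁻¹`. Let `u_k` and `v_k` count the reduced
words of length `k + 1` from `x` and from `x⁻¹` to `x⁻¹`. Since `(2m-1)^k` reduced words of
length `k + 1` end in a given letter, prepending a letter gives the cross recurrence
`u_{k+1} + v_k = v_{k+1} + u_k = (2m-1)^k`, whose solution is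
`2m u_k = (2m-1)^k + (m-1)(-1)^k - m`. Dividing by `|S_{k+1}| = 2m(2m-1)^k` makes `f_{k+1}` a
combination of the geometric sequences `1`, `(-1/(2m-1))^k` and `(1/(2m-1))^k`, and summing
three geometric series gives the formula.
-/

open scoped Finset

theorem List.exists_eq_cons_append_singleton_iff {ι : Type*} {a b : ι} (hab : a ≠ b)
    {w : List ι} : (∃ v, w = a :: (v ++ [b])) ↔ w.head? = some a ∧ w.getLast? = some b := by
  constructor
  · rintro ⟨v, rfl⟩
    simp [List.getLast?_cons]
  · rintro ⟨hhead, hlast⟩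
    obtain ⟨_ | ⟨c, v⟩, rfl⟩ := List.getLast?_eq_some_iff.mp hlast
    · exact absurd (Option.some.inj hhead).symm hab
    · exact ⟨v, by simpa using hhead⟩

section Chains

variable {ι : Type*} [Fintype ι] [DecidableEq ι] (r : ι → ι → Prop) [DecidableRel r]

def chains : ℕ → ι → ι → Finset (List ι)
  | 0, x, y => if x = y then {[x]} else ∅
  | k + 1, x, y => (Finset.univ.filter (r x)).biUnion fun z =>
      (chains k z y).map ⟨List.cons x, List.cons_injective⟩

theorem mem_chains {k : ℕ} {x y : ι} {w : List ι} :
    w ∈ chains r k x y ↔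
      w.IsChain r ∧ w.length = k + 1 ∧ w.head? = some x ∧ w.getLast? = some y := by
  induction k generalizing x w with
  | zero =>
    rcases w with _ | ⟨a, _ | ⟨b, v⟩⟩ <;> simp only [chains] <;> split_ifs <;> simp <;>
      grind
  | succ k ih =>
    rcases w with _ | ⟨a, _ | ⟨b, v⟩⟩
    · simp [chains]
    · simp [chains, ih]
    · simp only [chains, Finset.mem_biUnion, Finset.mem_filter, Finset.mem_univ, true_and,
        Finset.mem_map, Function.Embedding.coeFn_mk, List.cons.injEq, ih,
        List.isChain_cons_cons, List.length_cons, List.head?_cons, List.getLast?_cons_cons,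
        Option.some.injEq]
      grind

theorem card_chains_succ (k : ℕ) (x y : ι) :
    #(chains r (k + 1) x y) = ∑ z ∈ Finset.univ.filter (r x), #(chains r k z y) := by
  rw [chains, Finset.card_biUnion]
  · simp
  · intro z₁ _ z₂ _ hne
    simp only [Finset.disjoint_left, Finset.mem_map, Function.Embedding.coeFn_mk]
    rintro _ ⟨v, hv, rfl⟩ ⟨v', hv', hvv'⟩
    obtain rfl := List.cons_injective hvv'
    rw [mem_chains] at hv hv'
    exact hne (Option.some.inj (hv.2.2.1.symm.trans hv'.2.2.1))

end Chains

theorem two_mul_eq_of_cross_recurrence {m : ℝ} {u v : ℕ → ℝ} (hu0 : u 0 = 0) (hv0 : v 0 = 1)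
    (hu : ∀ k, u (k + 1) + v k = (2 * m - 1) ^ k) (hv : ∀ k, v (k + 1) + u k = (2 * m - 1) ^ k)
    (k : ℕ) : 2 * m * u k = (2 * m - 1) ^ k + (m - 1) * (-1) ^ k - m := by
  suffices v k - u k = 1 ∧ m * (u k + v k) = (2 * m - 1) ^ k + (m - 1) * (-1) ^ k by
    linear_combination this.2 - m * this.1
  induction k with
  | zero => simp [hu0, hv0]
  | succ k ih =>
    constructor
    · linear_combination hv k - hu k + ih.1
    · linear_combination m * hu k + m * hv k - ih.2

section ReducedWords

variable {ι : Type*}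

-- `FreeGroup.IsReduced L` unfolds to `L.IsChain ReducedRel`.
abbrev ReducedRel (a b : ι × Bool) : Prop := a.1 = b.1 → a.2 = b.2

def letterInv (a : ι × Bool) : ι × Bool := (a.1, !a.2)

@[simp] theorem letterInv_letterInv (a : ι × Bool) : letterInv (letterInv a) = a := by
  simp [letterInv]

theorem letterInv_ne (a : ι × Bool) : letterInv a ≠ a := by
  simp [letterInv, Prod.ext_iff]

variable [Fintype ι] [DecidableEq ι]

theorem filter_reducedRel (x : ι × Bool) :
    Finset.univ.filter (ReducedRel x) = Finset.univ.erase (letterInv x) := by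
  ext z
  obtain ⟨i, b⟩ := x
  obtain ⟨j, c⟩ := z
  cases b <;> cases c <;> simp [ReducedRel, letterInv, Prod.ext_iff, ne_comm]

theorem card_chains_succ_add_card_chains_letterInv (k : ℕ) (x y : ι × Bool) :
    #(chains ReducedRel (k + 1) x y) + #(chains ReducedRel k (letterInv x) y)
      = ∑ z, #(chains ReducedRel k z y) := by
  rw [card_chains_succ, filter_reducedRel, Finset.sum_erase_add _ _ (Finset.mem_univ _)]

theorem sum_card_chains (k : ℕ) (y : ι × Bool) :
    ∑ z, (#(chains ReducedRel k z y) : ℝ) = (2 * Fintype.card ι - 1) ^ k := by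
  induction k with
  | zero => simp [chains, apply_ite]
  | succ k ih =>
    have hstep (x : ι × Bool) : (#(chains ReducedRel (k + 1) x y) : ℝ)
        = (2 * Fintype.card ι - 1) ^ k - #(chains ReducedRel k (letterInv x) y) := by
      rw [← ih, eq_sub_iff_add_eq]
      exact_mod_cast card_chains_succ_add_card_chains_letterInv k x y
    have hinv : ∑ x, (#(chains ReducedRel k (letterInv x) y) : ℝ)
        = ∑ x, (#(chains ReducedRel k x y) : ℝ) :=
      (Function.Involutive.bijective letterInv_letterInv).sum_comp
        fun x => (#(chains ReducedRel k x y) : ℝ)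
    simp only [hstep, Finset.sum_sub_distrib, hinv, ih, Finset.sum_const, Finset.card_univ,
      Fintype.card_prod, Fintype.card_bool, nsmul_eq_mul]
    push_cast
    ring

theorem two_mul_card_chains_letterInv (x : ι × Bool) (k : ℕ) :
    2 * Fintype.card ι * (#(chains ReducedRel k x (letterInv x)) : ℝ)
      = (2 * Fintype.card ι - 1) ^ k + (Fintype.card ι - 1) * (-1) ^ k - Fintype.card ι := by
  have hstep (z : ι × Bool) (k : ℕ) : (#(chains ReducedRel (k + 1) z (letterInv x)) : ℝ)
      + #(chains ReducedRel k (letterInv z) (letterInv x)) = (2 * Fintype.card ι - 1) ^ k := by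
    rw [← sum_card_chains]
    exact_mod_cast card_chains_succ_add_card_chains_letterInv k z (letterInv x)
  refine two_mul_eq_of_cross_recurrence (u := fun k => #(chains ReducedRel k x (letterInv x)))
    (v := fun k => #(chains ReducedRel k (letterInv x) (letterInv x))) ?_ ?_ (hstep x) ?_ k
  · simp [chains, (letterInv_ne x).symm]
  · simp [chains]
  · simpa using hstep (letterInv x)

end ReducedWords

section Dcone

variable {m : ℕ}

theorem mem_dcone_iff {u v g : FG m} :
    g ∈ dcone u v ↔ ∃ w, g.toWord = u.toWord ++ w ++ v.toWord := by
  constructor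
  · rintro ⟨f, rfl, hlen⟩
    refine ⟨f.toWord, List.Sublist.eq_of_length ?_ (by simpa [glen, add_assoc] using hlen)⟩
    exact (FreeGroup.toWord_mul_sublist _ _).trans
      ((FreeGroup.toWord_mul_sublist _ _).append_right _)
  · rintro ⟨w, hg⟩
    have hw : FreeGroup.IsReduced w :=
      FreeGroup.isReduced_toWord.infix ⟨u.toWord, v.toWord, hg.symm⟩
    refine ⟨FreeGroup.mk w, ?_, ?_⟩
    · rw [← FreeGroup.mk_toWord (x := g), hg, ← FreeGroup.mul_mk, ← FreeGroup.mul_mk,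
        FreeGroup.mk_toWord, FreeGroup.mk_toWord]
    · simp [glen, hg, hw.reduce_eq, add_assoc]

theorem nk_dcone_zero {u : FG m} (hu : u ≠ 1) (v : FG m) : nk (dcone u v) 0 = 0 := by
  suffices {g ∈ dcone u v | glen g = 0} = ∅ by rw [nk, this, Set.ncard_empty]
  refine Set.eq_empty_of_forall_notMem ?_
  rintro g ⟨⟨f, -, hlen⟩, hg⟩
  have hu₀ : u.toWord.length = 0 := by simp only [glen] at hlen hg; omega
  exact hu (FreeGroup.toWord_eq_nil_iff.mp (List.eq_nil_of_length_eq_zero hu₀))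

theorem toWord_image_dcone_inv (a : FG m) {x : Fin m × Bool} (ha : a.toWord = [x]) (k : ℕ) :
    FreeGroup.toWord '' {g ∈ dcone a a⁻¹ | glen g = k + 1}
      = ↑(chains ReducedRel k x (letterInv x)) := by
  have ha' : a⁻¹.toWord = [letterInv x] := by simp [ha, FreeGroup.invRev, letterInv]
  ext w
  simp only [Set.mem_image, Set.mem_ofPred_eq, mem_dcone_iff, ha, ha', Finset.mem_coe, mem_chains,
    ← List.exists_eq_cons_append_singleton_iff (letterInv_ne x).symm]
  constructor
  · rintro ⟨g, ⟨⟨v, hv⟩, hlen⟩, rfl⟩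
    exact ⟨FreeGroup.isReduced_toWord, hlen, v, by simpa using hv⟩
  · rintro ⟨hred, hlen, v, rfl⟩
    refine ⟨FreeGroup.mk (x :: (v ++ [letterInv x])), ?_, ?_⟩
    · simp [FreeGroup.IsReduced.reduce_eq hred, glen, hlen]
    · simp [FreeGroup.IsReduced.reduce_eq hred]

theorem nk_dcone_inv_succ (a : FG m) {x : Fin m × Bool} (ha : a.toWord = [x]) (k : ℕ) :
    nk (dcone a a⁻¹) (k + 1) = #(chains ReducedRel k x (letterInv x)) := by
  rw [nk, ← Set.ncard_image_of_injective _ FreeGroup.toWord_injective,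
    toWord_image_dcone_inv a ha, Set.ncard_coe_finset]

end Dcone

section GeneratingFunction

variable {m : ℕ} {R : Set (FG m)}

theorem fk_succ_mul_pow (hm : 0 < m) {k : ℕ}
    (hk : 2 * m * (nk R (k + 1) : ℝ) = (2 * m - 1) ^ k + (m - 1) * (-1) ^ k - m) (t : ℝ) :
    fk R (k + 1) * t ^ (k + 1) = t / (4 * m ^ 2) * t ^ k
      + (m - 1) * t / (4 * m ^ 2) * (-t / (2 * m - 1)) ^ k
      - t / (4 * m) * (t / (2 * m - 1)) ^ k := by
  have hm1 : (1 : ℝ) ≤ m := by exact_mod_cast hm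
  have hq : (2 * m - 1 : ℝ) ^ k ≠ 0 := pow_ne_zero _ (by linarith)
  have hnk : (nk R (k + 1) : ℝ) = ((2 * m - 1) ^ k + (m - 1) * (-1) ^ k - m) / (2 * m) := by
    rw [← hk]; field_simp
  rw [fk, hnk, sphereCard, if_neg k.succ_ne_zero, Nat.add_sub_cancel, div_pow, div_pow, neg_pow t]
  field_simp
  ring

theorem hasSum_fk_mul_pow (hm : 0 < m) (h0 : nk R 0 = 0)
    (hsucc : ∀ k, 2 * m * (nk R (k + 1) : ℝ) = (2 * m - 1) ^ k + (m - 1) * (-1) ^ k - m)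
    {t : ℝ} (ht : |t| < 1) :
    HasSum (fun k => fk R k * t ^ k) (t / (4 * m ^ 2) * (1 - t)⁻¹
      + (m - 1) * t / (4 * m ^ 2) * (1 - -t / (2 * m - 1))⁻¹
      - t / (4 * m) * (1 - t / (2 * m - 1))⁻¹) := by
  have hq : (1 : ℝ) ≤ 2 * m - 1 := by
    have : (1 : ℝ) ≤ m := by exact_mod_cast hm
    linarith
  have hdiv : |t / (2 * m - 1)| < 1 := by
    rw [abs_div, abs_of_pos (show (0 : ℝ) < 2 * m - 1 by linarith), div_lt_one (by linarith)]
    exact ht.trans_le hq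
  have htail := (((hasSum_geometric_of_abs_lt_one ht).mul_left (t / (4 * m ^ 2))).add
    ((hasSum_geometric_of_abs_lt_one (r := -t / (2 * m - 1)) (by rwa [neg_div, abs_neg])).mul_left
      ((m - 1) * t / (4 * m ^ 2)))).sub
    ((hasSum_geometric_of_abs_lt_one hdiv).mul_left (t / (4 * m)))
  have hsum : HasSum (fun k => fk R (k + 1) * t ^ (k + 1)) _ :=
    htail.congr_fun fun k => fk_succ_mul_pow hm (hsucc k) t
  simpa [fk, h0] using HasSum.zero_add (f := fun k => fk R k * t ^ k) hsum

theorem genFun_eq_of_two_mul_nk (hm : 0 < m) (h0 : nk R 0 = 0)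
    (hsucc : ∀ k, 2 * m * (nk R (k + 1) : ℝ) = (2 * m - 1) ^ k + (m - 1) * (-1) ^ k - m)
    {t : ℝ} (ht : |t| < 1) :
    genFun R t = t ^ 2 / (4 * m ^ 2 * (1 - t)) + t ^ 2 / (4 * m ^ 2 * (2 * m - 1 + t))
      - (2 * m - 1) * t ^ 2 / (2 * m * ((2 * m - 1) ^ 2 - t ^ 2)) := by
  rw [genFun, (hasSum_fk_mul_pow hm h0 hsucc ht).tsum_eq]
  obtain ⟨ht₀, ht₁⟩ := abs_lt.mp ht
  have hm₁ : (1 : ℝ) ≤ m := by exact_mod_cast hm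
  set q : ℝ := 2 * m - 1 with hq
  have hmq : (m : ℝ) = (q + 1) / 2 := by rw [hq]; ring
  have hq₀ : q ≠ 0 := by linarith
  have h₁ : 1 - t ≠ 0 := by linarith
  have h₂ : q + t ≠ 0 := by linarith
  have h₃ : q - t ≠ 0 := by linarith
  rw [hmq, sq_sub_sq, show 1 - -t / q = (q + t) / q by field_simp; ring,
    show 1 - t / q = (q - t) / q by field_simp, inv_div, inv_div]
  field_simp
  ring

end GeneratingFunction

/-- the generating function of `C(a,a⁻¹)` for a letter `a`. -/
theorem stmt16 {m : ℕ} (hm : 2 ≤ m) (a : FG m) (ha : glen a = 1) :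
    ∀ t ∈ Set.Ioo (-1 : ℝ) 1,
      genFun (dcone a a⁻¹) t
        = t ^ 2 / (4 * (m : ℝ) ^ 2 * (1 - t))
          + t ^ 2 / (4 * (m : ℝ) ^ 2 * (2 * (m : ℝ) - 1 + t))
          - (2 * (m : ℝ) - 1) * t ^ 2
            / (2 * (m : ℝ) * ((2 * (m : ℝ) - 1) ^ 2 - t ^ 2)) := by
  rintro t ⟨ht₀, ht₁⟩
  obtain ⟨x, hx⟩ := List.length_eq_one_iff.mp ha
  have ha₁ : a ≠ 1 := by rintro rfl; simp [glen] at ha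
  refine genFun_eq_of_two_mul_nk (by omega) (nk_dcone_zero ha₁ _) (fun k => ?_)
    (abs_lt.mpr ⟨ht₀, ht₁⟩)
  simpa [nk_dcone_inv_succ a hx] using two_mul_card_chains_letterInv x k
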